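/- Let f be holomorphic on Ω(c,C)^m × D_R^{n} × D_R^{q} with mixed asymptotic expansion a : [0,∞)^m × ℕ^{n} × ℕ^{q} → ℂ, and suppose |f| ≤ M on this domain. For p ∈ ℕ^q let a_p(z,y) denote the p-th Taylor coefficient of w ↦ f(z,y,w) at w = 0, so that f(z,y,w) = Σ_{p ∈ ℕ^q} a_p(z,y)·w^p on the domain. Then for every p ∈ ℕ^q: a_p is holomorphic on Ω(c,C)^m × D_R^n, a_p has mixed asymptotic expansion (α,β) ↦ a(α,β,p), and |a_p(z,y)| ≤ M/R^{|p|} for all (z,y) ∈ Ω(c,C)^m × D_R^n, where |p| := p₁+⋯+p_q. -/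

import Mathlib

noncomputable section
open scoped Classical

/-- Logarithmic model of a standard quadratic domain:
`Ω(c,C) = {z : Re z < log c - C·√|Im z|}`. -/
def SQD (c C : ℝ) : Set ℂ := {z : ℂ | z.re < Real.log c - C * Real.sqrt |z.im|}

/-- The cartesian power `Ω(c,C)^m`. -/
def QDom (c C : ℝ) (m : ℕ) : Set (Fin m → ℂ) := {z | ∀ i, z i ∈ SQD c C}

/-- Open disc `D_R` of radius `R` centred at `0`. -/
def Disc (R : ℝ) : Set ℂ := {w : ℂ | ‖w‖ < R}

/-- Polydisc `D_R^n`. -/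
def PDisc (R : ℝ) (n : ℕ) : Set (Fin n → ℂ) := {y | ∀ j, y j ∈ Disc R}

/-- The exponential monomial `exp⟨α,z⟩`. -/
def expMono {m : ℕ} (α : Fin m → ℝ) (z : Fin m → ℂ) : ℂ :=
  Complex.exp (∑ i, (α i : ℂ) * z i)

/-- Euclidean norm of `E(z) = (exp (Re z₁), …, exp (Re z_m))`. -/
def eNorm {m : ℕ} (z : Fin m → ℂ) : ℝ :=
  Real.sqrt (∑ i, Real.exp ((z i).re) ^ 2)

/-- A generalized power series with natural support: nonnegative exponents, and in each
coordinate the set of exponents below any bound is finite. -/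
def NaturalSeries {m : ℕ} (a : (Fin m → ℝ) → ℂ) : Prop :=
  (∀ α, a α ≠ 0 → ∀ i, 0 ≤ α i) ∧
  ∀ i : Fin m, ∀ R : ℝ, 0 < R → {r : ℝ | (∃ α, a α ≠ 0 ∧ α i = r) ∧ r ≤ R}.Finite

/-- `f` has asymptotic expansion `a` on `Ω(c,C)^m`: for every `ν > 0` there is a smaller
standard quadratic domain on which `f` minus the partial sum of weight `≤ ν` is
`o(‖E(z)‖^ν)` as `‖E(z)‖ → 0`. -/
def HasAsymExp {m : ℕ} (c C : ℝ) (f : (Fin m → ℂ) → ℂ) (a : (Fin m → ℝ) → ℂ) : Prop :=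
  NaturalSeries a ∧
  ∀ ν : ℝ, 0 < ν → ∃ c' C' : ℝ, 0 < c' ∧ 0 < C' ∧ SQD c' C' ⊆ SQD c C ∧
    ∃ F : Finset (Fin m → ℝ),
      (∀ α, α ∈ F ↔ a α ≠ 0 ∧ ∑ i, α i ≤ ν) ∧
      ∀ ε : ℝ, 0 < ε → ∃ δ : ℝ, 0 < δ ∧
        ∀ z ∈ QDom c' C' m, eNorm z < δ →
          ‖f z - ∑ α ∈ F, a α * expMono α z‖ ≤ ε * eNorm z ^ ν

/-- Euclidean norm of `(E(z),y) = (exp Re z₁, …, exp Re z_m, |y₁|, …, |y_n|)`. -/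
def mixedNorm {m n : ℕ} (z : Fin m → ℂ) (y : Fin n → ℂ) : ℝ :=
  Real.sqrt (∑ i, Real.exp ((z i).re) ^ 2 + ∑ j, ‖y j‖ ^ 2)

/-- A mixed series: coefficient function with natural support in the first `m`
(real-exponent) coordinates. -/
def MixedNatural {m n : ℕ} (a : (Fin m → ℝ) → (Fin n → ℕ) → ℂ) : Prop :=
  (∀ α β, a α β ≠ 0 → ∀ i, 0 ≤ α i) ∧
  ∀ i : Fin m, ∀ R : ℝ, 0 < R →
    {r : ℝ | (∃ α β, a α β ≠ 0 ∧ α i = r) ∧ r ≤ R}.Finite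

/-- `f` has mixed asymptotic expansion `a` on `Ω(c,C)^m × D_R^n`. -/
def HasMixedAsymExp {m n : ℕ} (c C R : ℝ)
    (f : ((Fin m → ℂ) × (Fin n → ℂ)) → ℂ)
    (a : (Fin m → ℝ) → (Fin n → ℕ) → ℂ) : Prop :=
  MixedNatural a ∧
  ∀ ν : ℝ, 0 < ν → ∃ c' C' R' : ℝ, 0 < c' ∧ 0 < C' ∧ 0 < R' ∧ R' ≤ R ∧
    SQD c' C' ⊆ SQD c C ∧
    ∃ F : Finset ((Fin m → ℝ) × (Fin n → ℕ)),
      (∀ p, p ∈ F ↔ a p.1 p.2 ≠ 0 ∧ (∑ i, p.1 i) + (∑ j, (p.2 j : ℝ)) ≤ ν) ∧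
      ∀ ε : ℝ, 0 < ε → ∃ δ : ℝ, 0 < δ ∧
        ∀ z ∈ QDom c' C' m, ∀ y ∈ PDisc R' n, mixedNorm z y < δ →
          ‖f (z, y) - ∑ p ∈ F, a p.1 p.2 * expMono p.1 z * ∏ j, (y j) ^ (p.2 j)‖
            ≤ ε * mixedNorm z y ^ ν

/-!
Averaging `w ↦ f (z, y, w)` over the points `r ζ^k` of the torus of radius `r`, where `ζ` is a
primitive `N`-th root of unity, with weights `ζ^(-k·p)`, returns the sum of the terms
`b_{p'}(z, y) r^|p'|` over `p' ≡ p mod N`. As `N → ∞` only `b_p(z, y) r^|p|` survives, by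
dominated convergence; this discrete Cauchy formula gives the Cauchy estimate
`‖b_p‖ r^|p| ≤ M`. The estimate at radius `R` makes the convergence uniform in `(z, y)`, so `b_p`
is a uniform limit of holomorphic functions. Applying the estimate to `f` minus its partial sum of
weight `ν + |p|`, on tori of radius `s` just above `‖(E(z), y)‖`, bounds `b_p` minus the
corresponding partial sum by `ε s^ν`.
-/

open Filter Topology Finset Metric

section TorusAverage

variable {q N : ℕ} {ζ : ℂ}

lemma sum_pow_div_pow_pow (hζ : IsPrimitiveRoot ζ N) (hN : 0 < N) (a b : ℕ) :
    ∑ t : Fin N, (ζ ^ a / ζ ^ b) ^ (t : ℕ) = if a ≡ b [MOD N] then (N : ℂ) else 0 := by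
  have hroot : (ζ ^ a / ζ ^ b) ^ N = 1 := by
    rw [div_pow, ← pow_mul, ← pow_mul, mul_comm a, mul_comm b, pow_mul, pow_mul, hζ.pow_eq_one,
      one_pow, one_pow, div_one]
  have hone : ζ ^ a / ζ ^ b = 1 ↔ a ≡ b [MOD N] := by
    rw [div_eq_one_iff_eq (pow_ne_zero _ (hζ.ne_zero hN.ne')),
      (hζ.isOfFinOrder hN.ne').pow_eq_pow_iff_modEq, ← hζ.eq_orderOf]
  rw [Fin.sum_univ_eq_sum_range (fun t => (ζ ^ a / ζ ^ b) ^ t)]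
  split_ifs with h
  · simp [hone.mpr h]
  · rw [geom_sum_eq (mt hone.mp h), hroot, sub_self, zero_div]

def torusAverage (ζ : ℂ) (N : ℕ) (p : Fin q → ℕ) (r : ℝ) (G : (Fin q → ℂ) → ℂ) : ℂ :=
  ((N : ℂ) ^ q)⁻¹ * ∑ k : Fin q → Fin N,
    (∏ j, ζ ^ ((k j : ℕ) * p j))⁻¹ * G (fun j => r * ζ ^ (k j : ℕ))

lemma norm_torusPoint (hζ : IsPrimitiveRoot ζ N) (hN : 0 < N) {r : ℝ} (hr : 0 ≤ r) (t : ℕ) :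
    ‖(r : ℂ) * ζ ^ t‖ = r := by
  rw [norm_mul, norm_pow, hζ.norm'_eq_one hN.ne', one_pow, mul_one, Complex.norm_real,
    Real.norm_of_nonneg hr]

lemma torusAverage_monomial (hζ : IsPrimitiveRoot ζ N) (hN : 0 < N) (p p' : Fin q → ℕ) (r : ℝ) :
    ((N : ℂ) ^ q)⁻¹ * ∑ k : Fin q → Fin N,
      (∏ j, ζ ^ ((k j : ℕ) * p j))⁻¹ * ∏ j, ((r : ℂ) * ζ ^ (k j : ℕ)) ^ p' j
      = if ∀ j, p' j ≡ p j [MOD N] then (r : ℂ) ^ (∑ j, p' j) else 0 := by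
  have hζ0 : ζ ≠ 0 := hζ.ne_zero hN.ne'
  have hterm : ∀ k : Fin q → Fin N,
      (∏ j, ζ ^ ((k j : ℕ) * p j))⁻¹ * ∏ j, ((r : ℂ) * ζ ^ (k j : ℕ)) ^ p' j
        = (r : ℂ) ^ (∑ j, p' j) * ∏ j, (ζ ^ p' j / ζ ^ p j) ^ (k j : ℕ) := by
    intro k
    rw [← prod_pow_eq_pow_sum, ← prod_inv_distrib, ← prod_mul_distrib, ← prod_mul_distrib]
    refine prod_congr rfl fun j _ => ?_
    rw [div_pow, ← pow_mul, ← pow_mul, mul_pow, ← pow_mul, mul_comm (k j : ℕ) (p' j),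
      mul_comm (p j) (k j : ℕ)]
    field_simp
  simp_rw [hterm, ← mul_sum]
  rw [← Fintype.prod_sum (fun j (t : Fin N) => (ζ ^ p' j / ζ ^ p j) ^ (t : ℕ))]
  simp_rw [sum_pow_div_pow_pow hζ hN, prod_ite_zero]
  simp only [mem_univ, true_implies, prod_const, card_univ, Fintype.card_fin]
  have hNq : (N : ℂ) ^ q ≠ 0 := pow_ne_zero _ (Nat.cast_ne_zero.mpr hN.ne')
  split_ifs
  · field_simp
  · simp

def aliases (N : ℕ) (p : Fin q → ℕ) : Set (Fin q → ℕ) := {p' | p' ≠ p ∧ ∀ j, p' j ≡ p j [MOD N]}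

variable {r : ℝ} {cf : (Fin q → ℕ) → ℂ} {G : (Fin q → ℂ) → ℂ}

lemma hasSum_torusAverage (hζ : IsPrimitiveRoot ζ N) (hN : 0 < N) (hr : 0 ≤ r)
    (hsum : ∀ w : Fin q → ℂ, (∀ j, ‖w j‖ = r) →
      HasSum (fun p => cf p * ∏ j, w j ^ p j) (G w)) (p : Fin q → ℕ) :
    HasSum (fun p' => if ∀ j, p' j ≡ p j [MOD N] then cf p' * (r : ℂ) ^ (∑ j, p' j) else 0)
      (torusAverage ζ N p r G) := by
  have hk := fun k : Fin q → Fin N =>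
    (hsum _ fun j => norm_torusPoint hζ hN hr (k j)).mul_left (∏ j, ζ ^ ((k j : ℕ) * p j))⁻¹
  refine ((hasSum_sum fun k _ => hk k).mul_left ((N : ℂ) ^ q)⁻¹).congr_fun fun p' => ?_
  simp_rw [mul_left_comm _ (cf p'), ← mul_sum]
  rw [mul_left_comm, torusAverage_monomial hζ hN p p' r, mul_ite, mul_zero]

lemma norm_torusAverage_le (hζ : IsPrimitiveRoot ζ N) (hN : 0 < N) (hr : 0 ≤ r) {B : ℝ}
    (hG : ∀ w : Fin q → ℂ, (∀ j, ‖w j‖ = r) → ‖G w‖ ≤ B) (p : Fin q → ℕ) :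
    ‖torusAverage ζ N p r G‖ ≤ B := by
  have hterm : ∀ k : Fin q → Fin N,
      ‖(∏ j, ζ ^ ((k j : ℕ) * p j))⁻¹ * G (fun j => r * ζ ^ (k j : ℕ))‖ ≤ B := by
    intro k
    rw [norm_mul, norm_inv, norm_prod]
    simp_rw [norm_pow, hζ.norm'_eq_one hN.ne', one_pow, prod_const_one, inv_one, one_mul]
    exact hG _ fun j => norm_torusPoint hζ hN hr (k j)
  have hNq : (0 : ℝ) < (N : ℝ) ^ q := by positivity
  calc ‖torusAverage ζ N p r G‖
      ≤ ((N : ℝ) ^ q)⁻¹ * ∑ _k : Fin q → Fin N, B := by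
        rw [torusAverage, norm_mul, norm_inv, norm_pow, Complex.norm_natCast]
        gcongr
        exact (norm_sum_le _ _).trans (sum_le_sum fun k _ => hterm k)
    _ = B := by
        rw [sum_const, card_univ, Fintype.card_pi, prod_const, card_univ, Fintype.card_fin,
          Fintype.card_fin, nsmul_eq_mul]
        push_cast
        field_simp

lemma norm_coeff_mul_pow_sub_torusAverage_le (hζ : IsPrimitiveRoot ζ N) (hN : 0 < N)
    (hr : 0 ≤ r) (hsum : ∀ w : Fin q → ℂ, (∀ j, ‖w j‖ = r) →
      HasSum (fun p => cf p * ∏ j, w j ^ p j) (G w))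
    {u : (Fin q → ℕ) → ℝ} (hu : Summable u) (hcu : ∀ p, ‖cf p‖ * r ^ (∑ j, p j) ≤ u p)
    (p : Fin q → ℕ) :
    ‖cf p * (r : ℂ) ^ (∑ j, p j) - torusAverage ζ N p r G‖
      ≤ ∑' p', (aliases N p).indicator u p' := by
  rw [norm_sub_rev]
  refine ((hasSum_torusAverage hζ hN hr hsum p).sub (hasSum_ite_eq p _)).norm_le_of_bounded
    (hu.indicator _).hasSum fun p' => ?_
  by_cases hp : p' = p
  · subst hp
    rw [if_pos fun j => Nat.ModEq.refl (p' j), if_pos rfl, sub_self, norm_zero,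
      Set.indicator_of_notMem fun h => h.1 rfl]
  · by_cases halias : ∀ j, p' j ≡ p j [MOD N]
    · rw [if_pos halias, if_neg hp, sub_zero,
        Set.indicator_of_mem (show p' ∈ aliases N p from ⟨hp, halias⟩), norm_mul, norm_pow,
        Complex.norm_real, Real.norm_of_nonneg hr]
      exact hcu p'
    · rw [if_neg halias, if_neg hp, Set.indicator_of_notMem fun h => halias h.2]
      simp

lemma tendsto_tsum_indicator_aliased (p : Fin q → ℕ) {u : (Fin q → ℕ) → ℝ} (hu : Summable u) :
    Tendsto (fun N => ∑' p', (aliases N p).indicator u p')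
      atTop (𝓝 0) := by
  have hlim : ∀ p', Tendsto (fun N => (aliases N p).indicator u p')
      atTop (𝓝 0) := by
    intro p'
    refine tendsto_const_nhds.congr' ?_
    filter_upwards [eventually_all.2 fun j => eventually_gt_atTop (p j + p' j)] with N hN
    refine (Set.indicator_of_notMem (fun h => h.1 (funext fun j => ?_)) _).symm
    exact Nat.ModEq.eq_of_lt_of_lt (h.2 j) (by linarith [hN j]) (by linarith [hN j])
  simpa using tendsto_tsum_of_dominated_convergence (summable_norm_iff.mpr hu) hlim
    (Eventually.of_forall fun N p' => norm_indicator_le_norm_self u p')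


lemma norm_coeff_mul_pow_le (hr : 0 ≤ r) (hsum : ∀ w : Fin q → ℂ, (∀ j, ‖w j‖ = r) →
      HasSum (fun p => cf p * ∏ j, w j ^ p j) (G w))
    {B : ℝ} (hG : ∀ w : Fin q → ℂ, (∀ j, ‖w j‖ = r) → ‖G w‖ ≤ B) (p : Fin q → ℕ) :
    ‖cf p‖ * r ^ (∑ j, p j) ≤ B := by
  have hu : Summable fun p' : Fin q → ℕ => ‖cf p'‖ * r ^ (∑ j, p' j) := by
    have hconst := hsum (fun _ => (r : ℂ)) fun _ => by
      rw [Complex.norm_real, Real.norm_of_nonneg hr]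
    refine (summable_norm_iff.mpr hconst.summable).congr fun p' => ?_
    rw [norm_mul, norm_prod, ← prod_pow_eq_pow_sum]
    simp_rw [norm_pow, Complex.norm_real, Real.norm_of_nonneg hr]
  refine ge_of_tendsto (by simpa using (tendsto_tsum_indicator_aliased p hu).const_add B) ?_
  filter_upwards [eventually_gt_atTop 0] with N hN
  have hζ := Complex.isPrimitiveRoot_exp N hN.ne'
  calc ‖cf p‖ * r ^ (∑ j, p j) = ‖cf p * (r : ℂ) ^ (∑ j, p j)‖ := by
        rw [norm_mul, norm_pow, Complex.norm_real, Real.norm_of_nonneg hr]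
    _ ≤ ‖torusAverage _ N p r G‖ + ‖cf p * (r : ℂ) ^ (∑ j, p j) - torusAverage _ N p r G‖ :=
        norm_le_norm_add_norm_sub' _ _
    _ ≤ _ := add_le_add (norm_torusAverage_le hζ hN hr hG p)
        (norm_coeff_mul_pow_sub_torusAverage_le hζ hN hr hsum hu (fun _ => le_rfl) p)

end TorusAverage

lemma summable_pow_sum {t : ℝ} (h0 : 0 ≤ t) (h1 : t < 1) :
    ∀ q : ℕ, Summable fun p : Fin q → ℕ => t ^ (∑ j, p j)
  | 0 => .of_finite
  | q + 1 => by
    have hprod : Summable fun x : ℕ × (Fin q → ℕ) => t ^ x.1 * t ^ (∑ j, x.2 j) :=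
      Summable.mul_of_nonneg (f := fun n : ℕ => t ^ n) (g := fun p : Fin q → ℕ => t ^ ∑ j, p j)
        (summable_geometric_of_lt_one h0 h1) (summable_pow_sum h0 h1 q)
        (fun n => pow_nonneg h0 n) (fun p => pow_nonneg h0 _)
    refine (Fin.consEquiv fun _ => ℕ).summable_iff.mp (hprod.congr fun x => ?_)
    simp only [Function.comp_apply, Fin.consEquiv_apply, Fin.sum_cons, pow_add]

section UniformLimit

variable {E F : Type*} [NormedAddCommGroup E] [NormedSpace ℂ E]
  [NormedAddCommGroup F] [NormedSpace ℂ F]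

lemma norm_fderiv_le_of_forall_norm_le {h : E → F} {x : E} {d B : ℝ} (hd : 0 < d)
    (hh : DifferentiableOn ℂ h (ball x d)) (hB : ∀ y ∈ ball x d, ‖h y‖ ≤ B) :
    ‖fderiv ℂ h x‖ ≤ 2 * B / d := by
  refine Complex.norm_fderiv_le_div_of_mapsTo_ball hh (fun y hy => ?_) hd
  rw [mem_closedBall]
  linarith [dist_le_norm_add_norm (h y) (h x), hB y hy, hB x (mem_ball_self hd)]

lemma differentiableOn_of_tendstoUniformlyOn [CompleteSpace F] {U : Set E} (hU : IsOpen U)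
    {A : ℕ → E → F} {g : E → F} (hA : ∀ N, DifferentiableOn ℂ (A N) U)
    (hAg : TendstoUniformlyOn A g atTop U) : DifferentiableOn ℂ g U := by
  intro x₀ hx₀
  obtain ⟨ε₀, hε₀, hball⟩ := isOpen_iff.mp hU x₀ hx₀
  set d := ε₀ / 2 with hd
  have hd0 : 0 < d := by positivity
  have hsub : ∀ x ∈ ball x₀ d, ball x d ⊆ U := fun x hx => (ball_subset_ball' (by
    rw [mem_ball] at hx; linarith)).trans hball
  have hcenter : ∀ x ∈ ball x₀ d, x ∈ U := fun x hx => hsub x hx (mem_ball_self hd0)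
  -- Cauchy estimates on the balls of radius `d` pass uniform convergence on to the derivatives.
  have hD : UniformCauchySeqOn (fun N => fderiv ℂ (A N)) atTop (ball x₀ d) := by
    rw [Metric.uniformCauchySeqOn_iff]
    intro ε hε
    obtain ⟨N₀, hN₀⟩ := Metric.uniformCauchySeqOn_iff.mp hAg.uniformCauchySeqOn (ε * d / 4)
      (by positivity)
    refine ⟨N₀, fun k hk l hl x hx => ?_⟩
    have hxU : U ∈ 𝓝 x := hU.mem_nhds (hcenter x hx)
    have hdiff := fun N => ((hA N).mono (hsub x hx))
    have hest := norm_fderiv_le_of_forall_norm_le hd0 ((hdiff k).sub (hdiff l))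
      fun y hy => by simpa [dist_eq_norm] using (hN₀ k hk l hl y (hsub x hx hy)).le
    rw [fderiv_sub ((hA k).differentiableAt hxU) ((hA l).differentiableAt hxU)] at hest
    rw [dist_eq_norm]
    calc _ ≤ 2 * (ε * d / 4) / d := hest
      _ < ε := by field_simp; linarith
  have hlim : ∀ x ∈ ball x₀ d,
      Tendsto (fun N => fderiv ℂ (A N) x) atTop (𝓝 (limUnder atTop fun N => fderiv ℂ (A N) x)) :=
    fun x hx => (hD.cauchySeq hx).tendsto_limUnder
  refine (hasFDerivAt_of_tendstoUniformlyOn isOpen_ball (hD.tendstoUniformlyOn_of_tendsto hlim)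
    (fun N x hx => ((hA N).differentiableAt (hU.mem_nhds (hcenter x hx))).hasFDerivAt)
    (fun x hx => hAg.tendsto_at (hcenter x hx)) (mem_ball_self hd0))
    |>.differentiableAt.differentiableWithinAt

end UniformLimit

lemma isOpen_QDom (c C : ℝ) (m : ℕ) : IsOpen (QDom c C m) := by
  have hSQD : IsOpen (SQD c C) := isOpen_lt Complex.continuous_re (by fun_prop)
  simpa [QDom, Set.pi, SQD] using isOpen_set_pi Set.finite_univ fun (_ : Fin m) _ => hSQD

lemma isOpen_PDisc (R : ℝ) (n : ℕ) : IsOpen (PDisc R n) := by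
  simpa [PDisc, Set.pi, Disc] using
    isOpen_set_pi Set.finite_univ fun (_ : Fin n) _ => isOpen_lt continuous_norm continuous_const

lemma append_mem_PDisc {n q : ℕ} {R : ℝ} {y : Fin n → ℂ} {w : Fin q → ℂ}
    (hy : y ∈ PDisc R n) (hw : w ∈ PDisc R q) : Fin.append y w ∈ PDisc R (n + q) :=
  Fin.addCases (fun j => by simpa using hy j) (fun j => by simpa using hw j)

lemma mixedNorm_append_le {m n q : ℕ} (z : Fin m → ℂ) (y : Fin n → ℂ) {w : Fin q → ℂ} {s : ℝ}
    (hs : 0 ≤ s) (hw : ∀ j, ‖w j‖ = s) (hzy : mixedNorm z y ≤ s) :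
    mixedNorm z (Fin.append y w) ≤ Real.sqrt (1 + q) * s := by
  have hsq : mixedNorm z y ^ 2 = ∑ i, Real.exp (z i).re ^ 2 + ∑ j, ‖y j‖ ^ 2 :=
    Real.sq_sqrt (by positivity)
  calc mixedNorm z (Fin.append y w) = Real.sqrt (mixedNorm z y ^ 2 + q * s ^ 2) := by
        rw [hsq, mixedNorm]
        simp [Fin.sum_univ_add, hw, add_assoc]
    _ ≤ Real.sqrt ((1 + q) * s ^ 2) := Real.sqrt_le_sqrt
        (by nlinarith [pow_le_pow_left₀ (show 0 ≤ mixedNorm z y from Real.sqrt_nonneg _) hzy 2])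
    _ = Real.sqrt (1 + q) * s := by rw [Real.sqrt_mul (by positivity), Real.sqrt_sq hs]

lemma differentiable_append_const {n q : ℕ} (w : Fin q → ℂ) :
    Differentiable ℂ fun y : Fin n → ℂ => Fin.append y w := by
  refine differentiable_pi.2 fun i => Fin.addCases (fun j => ?_) (fun j => ?_) i
  · simpa using differentiable_apply j
  · simp

lemma norm_coeff_le_of_forall_mem_Ioo {q : ℕ} {cf : (Fin q → ℕ) → ℂ} {G : (Fin q → ℂ) → ℂ}
    {s₀ s₁ K ν : ℝ} (hs₀ : 0 ≤ s₀) (hs : s₀ < s₁) (hν : 0 ≤ ν)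
    (hsum : ∀ s ∈ Set.Ioo s₀ s₁, ∀ w : Fin q → ℂ, (∀ j, ‖w j‖ = s) →
      HasSum (fun p => cf p * ∏ j, w j ^ p j) (G w)) (p : Fin q → ℕ)
    (hG : ∀ s ∈ Set.Ioo s₀ s₁, ∀ w : Fin q → ℂ, (∀ j, ‖w j‖ = s) →
      ‖G w‖ ≤ K * s ^ (ν + ∑ j, (p j : ℝ))) :
    ‖cf p‖ ≤ K * s₀ ^ ν := by
  have hcont : Continuous fun s : ℝ => K * s ^ ν :=
    continuous_const.mul (Real.continuous_rpow_const hν)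
  refine ge_of_tendsto (hcont.tendsto s₀ |>.mono_left (nhdsWithin_le_nhds (s := Set.Ioi s₀))) ?_
  filter_upwards [Ioo_mem_nhdsGT hs] with s hs'
  have hs0 : 0 < s := hs₀.trans_lt hs'.1
  have hcauchy := norm_coeff_mul_pow_le hs0.le (hsum s hs') (hG s hs') p
  rw [Real.rpow_add hs0, ← Nat.cast_sum, Real.rpow_natCast, ← mul_assoc] at hcauchy
  exact le_of_mul_le_mul_right hcauchy (by positivity)

lemma MixedNatural.append_right {m n q : ℕ} {a : (Fin m → ℝ) → (Fin (n + q) → ℕ) → ℂ}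
    (ha : MixedNatural a) (p : Fin q → ℕ) : MixedNatural fun α β => a α (Fin.append β p) :=
  ⟨fun α _ h => ha.1 α _ h, fun i R hR => (ha.2 i R hR).subset
    fun _ ⟨⟨α, _, h, hα⟩, hle⟩ => ⟨⟨α, _, h, hα⟩, hle⟩⟩

lemma injective_prodMk_append {A : Type*} {n q : ℕ} (p : Fin q → ℕ) :
    Function.Injective fun P : A × (Fin n → ℕ) => (P.1, Fin.append P.2 p) := by
  intro P Q h
  simp only [Prod.mk.injEq] at h
  exact Prod.ext h.1 (funext fun j => by simpa using congrFun h.2 (Fin.castAdd q j))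

def appendPreimage {A : Type*} {n q : ℕ} (F : Finset (A × (Fin (n + q) → ℕ)))
    (p : Fin q → ℕ) : Finset (A × (Fin n → ℕ)) :=
  F.preimage _ (injective_prodMk_append p).injOn

lemma hasSum_partialSum_append {m n q : ℕ} (F : Finset ((Fin m → ℝ) × (Fin (n + q) → ℕ)))
    (a : (Fin m → ℝ) → (Fin (n + q) → ℕ) → ℂ) (z : Fin m → ℂ) (y : Fin n → ℂ)
    (w : Fin q → ℂ) :
    HasSum (fun p => (∑ P ∈ appendPreimage F p,
        a P.1 (Fin.append P.2 p) * expMono P.1 z * ∏ j, y j ^ P.2 j) * ∏ j, w j ^ p j)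
      (∑ P ∈ F, a P.1 P.2 * expMono P.1 z * ∏ i, Fin.append y w i ^ P.2 i) := by
  set T := fun P : (Fin m → ℝ) × (Fin (n + q) → ℕ) =>
    a P.1 P.2 * expMono P.1 z * ∏ i, Fin.append y w i ^ P.2 i
  refine (hasSum_sum fun P _ => hasSum_ite_eq (fun j => P.2 (Fin.natAdd n j)) (T P)).congr_fun
    fun p => ?_
  rw [appendPreimage, sum_mul, ← sum_preimage _ F (injective_prodMk_append p).injOn]
  · refine sum_congr rfl fun P _ => ?_
    simp [T, Fin.prod_univ_add, mul_assoc]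
  · intro Q _ hQ
    rw [if_neg]
    rintro rfl
    exact hQ ⟨(Q.1, fun j => Q.2 (Fin.castAdd q j)), Prod.ext rfl Fin.append_castAdd_natAdd⟩

section TaylorCoefficients

variable {m n q : ℕ} {c C R M : ℝ} {f : (Fin m → ℂ) × (Fin (n + q) → ℂ) → ℂ}
  {b : (Fin q → ℕ) → (Fin m → ℂ) × (Fin n → ℂ) → ℂ}

lemma norm_taylorCoeff_mul_pow_le (hR : 0 < R)
    (hbd : ∀ x ∈ QDom c C m ×ˢ PDisc R (n + q), ‖f x‖ ≤ M)
    (hb : ∀ z ∈ QDom c C m, ∀ y ∈ PDisc R n, ∀ w ∈ PDisc R q,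
      HasSum (fun p : Fin q → ℕ => b p (z, y) * ∏ j, w j ^ p j) (f (z, Fin.append y w)))
    (p : Fin q → ℕ) {z : Fin m → ℂ} (hz : z ∈ QDom c C m) {y : Fin n → ℂ} (hy : y ∈ PDisc R n) :
    ‖b p (z, y)‖ * R ^ (∑ j, p j) ≤ M := by
  have hcont : Continuous fun r : ℝ => ‖b p (z, y)‖ * r ^ (∑ j, p j) := by fun_prop
  refine le_of_tendsto (hcont.tendsto R |>.mono_left (nhdsWithin_le_nhds (s := Set.Iio R))) ?_
  filter_upwards [Ioo_mem_nhdsLT hR] with r hr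
  have htorus : ∀ w : Fin q → ℂ, (∀ j, ‖w j‖ = r) → w ∈ PDisc R q :=
    fun w hw j => (hw j).trans_lt hr.2
  exact norm_coeff_mul_pow_le hr.1.le (fun w hw => hb z hz y hy w (htorus w hw))
    (fun w hw => hbd _ ⟨hz, append_mem_PDisc hy (htorus w hw)⟩) p

lemma differentiableOn_taylorCoeff (hR : 0 < R)
    (hf : DifferentiableOn ℂ f (QDom c C m ×ˢ PDisc R (n + q)))
    (hbd : ∀ x ∈ QDom c C m ×ˢ PDisc R (n + q), ‖f x‖ ≤ M)
    (hb : ∀ z ∈ QDom c C m, ∀ y ∈ PDisc R n, ∀ w ∈ PDisc R q,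
      HasSum (fun p : Fin q → ℕ => b p (z, y) * ∏ j, w j ^ p j) (f (z, Fin.append y w)))
    (p : Fin q → ℕ) : DifferentiableOn ℂ (b p) (QDom c C m ×ˢ PDisc R n) := by
  set r := R / 2
  have hr : 0 < r := half_pos hR
  have hrR : r < R := half_lt_self hR
  have htorus : ∀ w : Fin q → ℂ, (∀ j, ‖w j‖ = r) → w ∈ PDisc R q :=
    fun w hw j => (hw j).trans_lt hrR
  set A : ℕ → (Fin m → ℂ) × (Fin n → ℂ) → ℂ := fun N x =>
    torusAverage (Complex.exp (2 * Real.pi * Complex.I / N)) N p r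
      (fun w => f (x.1, Fin.append x.2 w))
  have hA : ∀ N, DifferentiableOn ℂ (A N) (QDom c C m ×ˢ PDisc R n) := by
    intro N
    refine (DifferentiableOn.fun_sum fun k _ => (hf.comp ?_ fun x hx => ⟨hx.1,
      append_mem_PDisc hx.2 (htorus _ fun j => ?_)⟩).const_mul _).const_mul _
    · exact (differentiable_fst.prodMk
        ((differentiable_append_const _).comp differentiable_snd)).differentiableOn
    · exact norm_torusPoint (Complex.isPrimitiveRoot_exp N (k j).pos.ne') (k j).pos hr.le _
  have hu : Summable fun p' : Fin q → ℕ => M * (r / R) ^ (∑ j, p' j) :=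
    (summable_pow_sum (by positivity) ((div_lt_one hR).mpr hrR) q).mul_left M
  have hcu : ∀ x ∈ QDom c C m ×ˢ PDisc R n, ∀ p' : Fin q → ℕ,
      ‖b p' x‖ * r ^ (∑ j, p' j) ≤ M * (r / R) ^ (∑ j, p' j) := by
    intro x hx p'
    calc ‖b p' x‖ * r ^ (∑ j, p' j) = ‖b p' x‖ * R ^ (∑ j, p' j) * (r / R) ^ (∑ j, p' j) := by
          rw [mul_assoc, ← mul_pow, mul_div_cancel₀ _ hR.ne']
      _ ≤ M * (r / R) ^ (∑ j, p' j) := by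
          gcongr
          exact norm_taylorCoeff_mul_pow_le hR hbd hb p' hx.1 hx.2
  have hAb : TendstoUniformlyOn A (fun x => b p x * (r : ℂ) ^ (∑ j, p j)) atTop
      (QDom c C m ×ˢ PDisc R n) := by
    rw [Metric.tendstoUniformlyOn_iff]
    intro ε hε
    filter_upwards [(tendsto_tsum_indicator_aliased p hu).eventually (gt_mem_nhds hε),
      eventually_gt_atTop 0] with N hN hN0 x hx
    rw [dist_eq_norm]
    exact (norm_coeff_mul_pow_sub_torusAverage_le (Complex.isPrimitiveRoot_exp N hN0.ne') hN0 hr.le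
      (fun w hw => hb x.1 hx.1 x.2 hx.2 w (htorus w hw)) hu (hcu x hx) p).trans_lt hN
  have hrp : (r : ℂ) ^ (∑ j, p j) ≠ 0 := pow_ne_zero _ (Complex.ofReal_ne_zero.mpr hr.ne')
  refine ((differentiableOn_of_tendstoUniformlyOn ((isOpen_QDom c C m).prod (isOpen_PDisc R n))
    hA hAb).mul_const ((r : ℂ) ^ (∑ j, p j))⁻¹).congr fun x _ => ?_
  field_simp

lemma norm_taylorCoeff_sub_partialSum_le {c' C' R' δ ε ν : ℝ}
    {a : (Fin m → ℝ) → (Fin (n + q) → ℕ) → ℂ} {F : Finset ((Fin m → ℝ) × (Fin (n + q) → ℕ))}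
    (hb : ∀ z ∈ QDom c C m, ∀ y ∈ PDisc R n, ∀ w ∈ PDisc R q,
      HasSum (fun p : Fin q → ℕ => b p (z, y) * ∏ j, w j ^ p j) (f (z, Fin.append y w)))
    (hsub : QDom c' C' m ⊆ QDom c C m) (hR'R : R' ≤ R) (hε : 0 ≤ ε) (hν : 0 ≤ ν)
    (p : Fin q → ℕ)
    (hclause : ∀ z ∈ QDom c' C' m, ∀ y ∈ PDisc R' (n + q), mixedNorm z y < δ →
      ‖f (z, y) - ∑ P ∈ F, a P.1 P.2 * expMono P.1 z * ∏ j, y j ^ P.2 j‖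
        ≤ ε * mixedNorm z y ^ (ν + ∑ j, (p j : ℝ)))
    {z : Fin m → ℂ} (hz : z ∈ QDom c' C' m) {y : Fin n → ℂ} (hy : y ∈ PDisc R' n)
    (hzy : mixedNorm z y < min (δ / Real.sqrt (1 + q)) R') :
    ‖b p (z, y) - ∑ P ∈ appendPreimage F p,
        a P.1 (Fin.append P.2 p) * expMono P.1 z * ∏ j, y j ^ P.2 j‖
      ≤ ε * Real.sqrt (1 + q) ^ (ν + ∑ j, (p j : ℝ)) * mixedNorm z y ^ ν := by
  have hq : 0 < Real.sqrt (1 + q) := Real.sqrt_pos.mpr (by positivity)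
  have htorus : ∀ s ∈ Set.Ioo (mixedNorm z y) (min (δ / Real.sqrt (1 + q)) R'),
      ∀ w : Fin q → ℂ, (∀ j, ‖w j‖ = s) → w ∈ PDisc R' q :=
    fun s hs w hw j => (hw j).trans_lt (hs.2.trans_le (min_le_right _ _))
  refine norm_coeff_le_of_forall_mem_Ioo (cf := fun p' => b p' (z, y) - ∑ P ∈ appendPreimage F p',
      a P.1 (Fin.append P.2 p') * expMono P.1 z * ∏ j, y j ^ P.2 j)
    (G := fun w => f (z, Fin.append y w) -
      ∑ P ∈ F, a P.1 P.2 * expMono P.1 z * ∏ i, Fin.append y w i ^ P.2 i)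
    (show 0 ≤ mixedNorm z y from Real.sqrt_nonneg _) hzy hν (fun s hs w hw => ?_) p
    (fun s hs w hw => ?_)
  · have hw : w ∈ PDisc R q := fun j => (htorus s hs w hw j).trans_le hR'R
    exact ((hb z (hsub hz) y (fun j => (hy j).trans_le hR'R) w hw).sub
      (hasSum_partialSum_append F a z y w)).congr_fun fun p' => sub_mul _ _ _
  · have hs0 : 0 ≤ s := (Real.sqrt_nonneg _).trans hs.1.le
    have hle := mixedNorm_append_le z y hs0 hw hs.1.le
    have hlt : mixedNorm z (Fin.append y w) < δ :=
      hle.trans_lt ((lt_div_iff₀' hq).mp (hs.2.trans_le (min_le_left _ _)))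
    calc _ ≤ ε * mixedNorm z (Fin.append y w) ^ (ν + ∑ j, (p j : ℝ)) :=
          hclause z hz _ (append_mem_PDisc hy (htorus s hs w hw)) hlt
      _ ≤ ε * (Real.sqrt (1 + q) * s) ^ (ν + ∑ j, (p j : ℝ)) := by
          gcongr
          exact Real.sqrt_nonneg _
      _ = _ := by rw [Real.mul_rpow hq.le hs0, mul_assoc]

lemma hasMixedAsymExp_taylorCoeff {a : (Fin m → ℝ) → (Fin (n + q) → ℕ) → ℂ}
    (ha : HasMixedAsymExp c C R f a)
    (hb : ∀ z ∈ QDom c C m, ∀ y ∈ PDisc R n, ∀ w ∈ PDisc R q,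
      HasSum (fun p : Fin q → ℕ => b p (z, y) * ∏ j, w j ^ p j) (f (z, Fin.append y w)))
    (p : Fin q → ℕ) : HasMixedAsymExp c C R (b p) fun α β => a α (Fin.append β p) := by
  refine ⟨ha.1.append_right p, fun ν hν => ?_⟩
  obtain ⟨c', C', R', hc', hC', hR', hR'R, hsub, F, hF, hclause⟩ :=
    ha.2 (ν + ∑ j, (p j : ℝ)) (by positivity)
  refine ⟨c', C', R', hc', hC', hR', hR'R, hsub, appendPreimage F p, fun P => ?_, fun ε hε => ?_⟩
  · rw [appendPreimage, mem_preimage, hF, Fin.sum_univ_add]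
    simp only [Fin.append_left, Fin.append_right]
    rw [← add_assoc, add_le_add_iff_right]
  · have hK : 0 < Real.sqrt (1 + q) ^ (ν + ∑ j, (p j : ℝ)) :=
      Real.rpow_pos_of_pos (Real.sqrt_pos.mpr (by positivity)) _
    obtain ⟨δ, hδ, hδc⟩ := hclause (ε / Real.sqrt (1 + q) ^ (ν + ∑ j, (p j : ℝ))) (by positivity)
    refine ⟨min (δ / Real.sqrt (1 + q)) R', lt_min (by positivity) hR', fun z hz y hy hzy => ?_⟩
    have := norm_taylorCoeff_sub_partialSum_le hb (fun z hz i => hsub (hz i)) hR'R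
      (by positivity) hν.le p hδc hz hy hzy
    rwa [div_mul_cancel₀ _ hK.ne'] at this

end TaylorCoefficients

theorem stmt7_general (m n q : ℕ) (c C R M : ℝ) (hR : 0 < R)
    (f : ((Fin m → ℂ) × (Fin (n + q) → ℂ)) → ℂ)
    (hf : DifferentiableOn ℂ f ((QDom c C m) ×ˢ (PDisc R (n + q))))
    (a : (Fin m → ℝ) → (Fin (n + q) → ℕ) → ℂ)
    (ha : HasMixedAsymExp c C R f a)
    (hbd : ∀ p ∈ (QDom c C m) ×ˢ (PDisc R (n + q)), ‖f p‖ ≤ M)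
    (b : (Fin q → ℕ) → ((Fin m → ℂ) × (Fin n → ℂ)) → ℂ)
    (hb : ∀ z ∈ QDom c C m, ∀ y ∈ PDisc R n, ∀ w ∈ PDisc R q,
      HasSum (fun p : Fin q → ℕ => b p (z, y) * ∏ j, (w j) ^ (p j))
        (f (z, Fin.append y w))) :
    ∀ p : Fin q → ℕ,
      DifferentiableOn ℂ (b p) ((QDom c C m) ×ˢ (PDisc R n)) ∧
      HasMixedAsymExp c C R (b p) (fun α β => a α (Fin.append β p)) ∧
      ∀ z ∈ QDom c C m, ∀ y ∈ PDisc R n, ‖b p (z, y)‖ ≤ M / R ^ (∑ j, p j) := fun p =>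
  ⟨differentiableOn_taylorCoeff hR hf hbd hb p, hasMixedAsymExp_taylorCoeff ha hb p,
    fun _ hz _ hy =>
      (le_div_iff₀ (by positivity)).mpr (norm_taylorCoeff_mul_pow_le hR hbd hb p hz hy)⟩

/-- Taylor coefficients in the last `q` disc variables of a bounded
holomorphic function with mixed asymptotic expansion: each coefficient `b_p` is holomorphic
with mixed asymptotic expansion `(α,β) ↦ a(α,(β,p))` and satisfies the Cauchy bound
`|b_p| ≤ M/R^{|p|}`. -/
theorem stmt7 (m n q : ℕ) (c C R M : ℝ) (hc : 0 < c) (hC : 0 < C) (hR : 0 < R) (hM : 0 < M)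
    (f : ((Fin m → ℂ) × (Fin (n + q) → ℂ)) → ℂ)
    (hf : DifferentiableOn ℂ f ((QDom c C m) ×ˢ (PDisc R (n + q))))
    (a : (Fin m → ℝ) → (Fin (n + q) → ℕ) → ℂ)
    (ha : HasMixedAsymExp c C R f a)
    (hbd : ∀ p ∈ (QDom c C m) ×ˢ (PDisc R (n + q)), ‖f p‖ ≤ M)
    (b : (Fin q → ℕ) → ((Fin m → ℂ) × (Fin n → ℂ)) → ℂ)
    (hb : ∀ z ∈ QDom c C m, ∀ y ∈ PDisc R n, ∀ w ∈ PDisc R q,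
      HasSum (fun p : Fin q → ℕ => b p (z, y) * ∏ j, (w j) ^ (p j))
        (f (z, Fin.append y w))) :
    ∀ p : Fin q → ℕ,
      DifferentiableOn ℂ (b p) ((QDom c C m) ×ˢ (PDisc R n)) ∧
      HasMixedAsymExp c C R (b p) (fun α β => a α (Fin.append β p)) ∧
      ∀ z ∈ QDom c C m, ∀ y ∈ PDisc R n, ‖b p (z, y)‖ ≤ M / R ^ (∑ j, p j) :=
  stmt7_general m n q c C R M hR f hf a ha hbd b hb
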